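/- Let K be a field of characteristic p > 0, q = p^n, R = K[X,Y,U,V]/(XY − UV), with maximal ideal m = (x,y,u,v), and let F^n(K) = R/(x^q, y^q, u^q, v^q) be the n-th Frobenius power of K = R/m. Then dim_K Hom_R(K, F^n(K)) ≥ q = p^n. -/

import Mathlib

open MvPolynomial

/-- `R = K[X,Y,U,V]/(XY - UV)`. -/
noncomputable abbrev hypersurfaceRing (K : Type) [Field K] : Type :=
  MvPolynomial (Fin 4) K ⧸
    Ideal.span {(X 0 : MvPolynomial (Fin 4) K) * X 1 - X 2 * X 3}

/-- The `n`-th Frobenius power `F^n(K) = R/(x^q, y^q, u^q, v^q)` of the residue field. -/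
noncomputable abbrev frobPower (K : Type) [Field K] (q : ℕ) : Type :=
  hypersurfaceRing K ⧸
    Ideal.span ({Ideal.Quotient.mk _ (X 0) ^ q, Ideal.Quotient.mk _ (X 1) ^ q,
      Ideal.Quotient.mk _ (X 2) ^ q, Ideal.Quotient.mk _ (X 3) ^ q} :
        Set (hypersurfaceRing K))

/-- The socle `{t : F^n(K) | m · t = 0}`, identified with `Hom_R(K, F^n(K))`,
as a `K`-subspace of `F^n(K)`. -/
noncomputable abbrev frobSocle (K : Type) [Field K] (q : ℕ) :
    Submodule K (frobPower K q) :=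
  LinearMap.ker (LinearMap.mulLeft K
      ((Ideal.Quotient.mk _ (Ideal.Quotient.mk _ (X 0) : hypersurfaceRing K)) : frobPower K q)) ⊓
  LinearMap.ker (LinearMap.mulLeft K
      ((Ideal.Quotient.mk _ (Ideal.Quotient.mk _ (X 1) : hypersurfaceRing K)) : frobPower K q)) ⊓
  LinearMap.ker (LinearMap.mulLeft K
      ((Ideal.Quotient.mk _ (Ideal.Quotient.mk _ (X 2) : hypersurfaceRing K)) : frobPower K q)) ⊓
  LinearMap.ker (LinearMap.mulLeft K
      ((Ideal.Quotient.mk _ (Ideal.Quotient.mk _ (X 3) : hypersurfaceRing K)) : frobPower K q))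

/-! The elements `x^a u^k v^(a+k)` with `a + k + 1 = q` lie in the socle: using `xy = uv` to trade
`(uv)^k` for `(xy)^k`, each of their products with a variable becomes a multiple of some `x^q`,
`y^q`, `u^q` or `v^q`. They are linearly independent because the Segre embedding
`x ↦ ac, y ↦ bd, u ↦ ad, v ↦ bc` of `R` into `K[a,b,c,d]` induces a map from `F^n(K)` to the
quotient of `K[a,b,c,d]` by a monomial ideal, sending them to distinct monomials outside it. -/

namespace MvPolynomial

variable {R σ ι : Type*} [CommRing R]

theorem linearIndependent_mkₐ_monomial {S : Set (σ →₀ ℕ)} {e : ι → σ →₀ ℕ}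
    (he : Function.Injective e) (heS : ∀ i, ∀ s ∈ S, ¬ s ≤ e i) :
    LinearIndependent R fun i => Ideal.Quotient.mkₐ R
      (Ideal.span ((fun s => monomial s (1 : R)) '' S)) (monomial (e i) 1) := by
  classical
  rw [linearIndependent_iff']
  intro t g hg i hi
  by_contra hgi
  set P : MvPolynomial σ R := ∑ j ∈ t, monomial (e j) (g j)
  have hP : P ∈ Ideal.span ((fun s => monomial s (1 : R)) '' S) := by
    rw [← Ideal.Quotient.eq_zero_iff_mem, ← Ideal.Quotient.mkₐ_eq_mk R, ← hg, map_sum]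
    refine Finset.sum_congr rfl fun j _ => ?_
    rw [← map_smul, smul_monomial, smul_eq_mul, mul_one]
  have hcoeff : coeff (e i) P = g i := by
    simp only [P, coeff_sum, coeff_monomial, he.eq_iff, Finset.sum_ite_eq', if_pos hi]
  obtain ⟨s, hs, hle⟩ := mem_ideal_span_monomial_image.mp hP (e i)
    (mem_support_iff.mpr (hcoeff ▸ hgi))
  exact heS i s hs hle

end MvPolynomial

theorem mul_mem_span_pow_of_mul_eq_mul {A : Type*} [CommRing A] {x y u v : A}
    (h : x * y = u * v) {a k q : ℕ} (hq : a + k + 1 = q) :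
    ∀ z ∈ ({x, y, u, v} : Set A),
      z * (x ^ a * u ^ k * v ^ (a + k)) ∈ Ideal.span {x ^ q, y ^ q, u ^ q, v ^ q} := by
  have hpow : ∀ n, (u * v) ^ n = (x * y) ^ n := fun n => by rw [h]
  have mem : ∀ g ∈ ({x ^ q, y ^ q, u ^ q, v ^ q} : Set A), ∀ c : A,
      c * g ∈ Ideal.span {x ^ q, y ^ q, u ^ q, v ^ q} :=
    fun g hg c => Ideal.mul_mem_left _ c (Ideal.subset_span hg)
  subst hq
  rintro z (rfl | rfl | rfl | rfl)
  · convert mem (z ^ (a + k + 1)) (by simp) (y ^ k * v ^ a) using 1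
    linear_combination (z ^ (a + 1) * v ^ a) * hpow k
  · rcases a with _ | a
    · convert mem (z ^ (k + 1)) (by simp) (x ^ k) using 1
      linear_combination z * hpow k
    · convert mem (v ^ (a + 1 + k + 1)) (by simp) (x ^ a * u ^ (k + 1)) using 1
      linear_combination (x ^ a * u ^ k * v ^ (a + 1 + k)) * h
  · rcases a with _ | a
    · convert mem (z ^ (k + 1)) (by simp) (v ^ k) using 1
      ring
    · convert mem (x ^ (a + 1 + k + 1)) (by simp) (y ^ (k + 1) * v ^ a) using 1
      linear_combination (x ^ (a + 1) * v ^ a) * hpow (k + 1)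
  · convert mem (z ^ (a + k + 1)) (by simp) (x ^ a * u ^ k) using 1
    ring

open Finsupp in
/-- Exponents of the monomials `ac, bd, ad, bc` to which the Segre embedding sends `x, y, u, v`,
with `a, b, c, d` the variables `X 0, …, X 3` of the target. -/
noncomputable def segreExp : Fin 4 → Fin 4 →₀ ℕ :=
  ![single 0 1 + single 2 1, single 1 1 + single 3 1, single 0 1 + single 3 1,
    single 1 1 + single 2 1]

/-- The exponent of the Segre image of `x^a u^k v^(a+k)`. -/
noncomputable def socleExp (a k : ℕ) : Fin 4 →₀ ℕ :=
  a • segreExp 0 + k • segreExp 2 + (a + k) • segreExp 3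

theorem socleExp_apply_three (a k : ℕ) : socleExp a k 3 = k := by
  simp [socleExp, segreExp]

theorem not_smul_segreExp_le_socleExp {a k q : ℕ} (hq : a + k < q) (i : Fin 4) :
    ¬ q • segreExp i ≤ socleExp a k := by
  intro h
  have h0 := h 0
  have h1 := h 1
  fin_cases i <;> simp [socleExp, segreExp] at h0 h1 <;> omega

section Segre

variable (R : Type*) [CommRing R]

noncomputable def segre : MvPolynomial (Fin 4) R →ₐ[R] MvPolynomial (Fin 4) R :=
  aeval fun i => monomial (segreExp i) 1

variable {R}

theorem segre_X_pow (i : Fin 4) (n : ℕ) : segre R (X i ^ n) = monomial (n • segreExp i) 1 := by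
  rw [map_pow, segre, aeval_X, monomial_pow, one_pow]

theorem segre_relation : segre R (X 0 * X 1 - X 2 * X 3) = 0 := by
  simp only [map_sub, map_mul, segre, aeval_X, monomial_mul, mul_one, sub_eq_zero]
  congr 1
  simp only [segreExp, Matrix.cons_val]
  abel_nf

variable (K : Type) [Field K]

noncomputable def segreHypersurface : hypersurfaceRing K →ₐ[K] MvPolynomial (Fin 4) K :=
  Ideal.Quotient.liftₐ _ (segre K) fun P hP => by
    obtain ⟨c, rfl⟩ := Ideal.mem_span_singleton'.mp hP
    rw [map_mul, segre_relation, mul_zero]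

theorem segreHypersurface_mk_X_pow (i : Fin 4) (n : ℕ) :
    segreHypersurface K (Ideal.Quotient.mk _ (X i) ^ n) = monomial (n • segreExp i) 1 := by
  rw [← map_pow]
  exact segre_X_pow i n

noncomputable abbrev segreFrobIdeal (q : ℕ) : Ideal (MvPolynomial (Fin 4) K) :=
  Ideal.span ((fun s => monomial s (1 : K)) '' Set.range fun i => q • segreExp i)

noncomputable def segreFrob (q : ℕ) :
    frobPower K q →ₐ[K] MvPolynomial (Fin 4) K ⧸ segreFrobIdeal K q :=
  Ideal.quotientMapₐ _ (segreHypersurface K) <| Ideal.span_le.mpr <| by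
    rintro _ (rfl | rfl | rfl | rfl) <;>
      exact Ideal.subset_span ⟨_, ⟨_, rfl⟩, (segreHypersurface_mk_X_pow K _ q).symm⟩

end Segre

section Socle

variable {K : Type} [Field K]

local notation "mkX" i:max => (Ideal.Quotient.mk _ (X i) : hypersurfaceRing K)

variable (K) in
noncomputable def frobSocleMonomial (q a k : ℕ) : frobPower K q :=
  Ideal.Quotient.mk _ (mkX 0 ^ a * mkX 2 ^ k * mkX 3 ^ (a + k))

theorem frobSocleMonomial_mem_frobSocle {a k q : ℕ} (hq : a + k + 1 = q) :
    frobSocleMonomial K q a k ∈ frobSocle K q := by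
  have hrel : mkX 0 * mkX 1 = mkX 2 * mkX 3 := by
    rw [← map_mul, ← map_mul, Ideal.Quotient.eq]
    exact Ideal.subset_span rfl
  have hmem := mul_mem_span_pow_of_mul_eq_mul hrel hq
  refine ⟨⟨⟨?_, ?_⟩, ?_⟩, ?_⟩ <;>
    rw [SetLike.mem_coe, LinearMap.mem_ker, LinearMap.mulLeft_apply, frobSocleMonomial,
      ← map_mul, Ideal.Quotient.eq_zero_iff_mem] <;>
    exact hmem _ (by simp)

theorem segreFrob_frobSocleMonomial (q a k : ℕ) :
    segreFrob K q (frobSocleMonomial K q a k) =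
      Ideal.Quotient.mkₐ K _ (monomial (socleExp a k) 1) := by
  rw [frobSocleMonomial, segreFrob, Ideal.quotient_map_mkₐ]
  congr 1
  simp only [map_mul, segreHypersurface_mk_X_pow, monomial_mul, mul_one, socleExp]

end Socle

theorem dim_hom_frobPower_ge_general
    (K : Type) [Field K]
    (q : ℕ) :
    (q : Cardinal) ≤ Module.rank K (frobSocle K q) := by
  have hsum (a : Fin q) : (a : ℕ) + (q - 1 - a) + 1 = q := by omega
  let socle (a : Fin q) : frobSocle K q :=
    ⟨frobSocleMonomial K q a (q - 1 - a), frobSocleMonomial_mem_frobSocle (hsum a)⟩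
  have hinj : Function.Injective fun a : Fin q => socleExp a (q - 1 - a) := fun a b hab => by
    have := congrArg (· 3) hab
    simp only [socleExp_apply_three] at this
    omega
  have hmonomial : LinearIndependent K fun a : Fin q =>
      Ideal.Quotient.mkₐ K (segreFrobIdeal K q) (monomial (socleExp a (q - 1 - a)) 1) :=
    MvPolynomial.linearIndependent_mkₐ_monomial hinj
      (by rintro a _ ⟨i, rfl⟩; exact not_smul_segreExp_le_socleExp (by omega) i)
  have hcomp : ((segreFrob K q).toLinearMap ∘ₗ (frobSocle K q).subtype) ∘ socle =
      fun a : Fin q => Ideal.Quotient.mkₐ K (segreFrobIdeal K q) (monomial (socleExp a (q - 1 - a)) 1) :=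
    _root_.funext fun a => segreFrob_frobSocleMonomial q a (q - 1 - a)
  have hsocle : LinearIndependent K socle :=
    .of_comp ((segreFrob K q).toLinearMap ∘ₗ (frobSocle K q).subtype) (hcomp ▸ hmonomial)
  simpa using hsocle.cardinal_le_rank

/-- For `R = K[X,Y,U,V]/(XY-UV)` and `q = p^n`,
`dim_K Hom_R(K, F^n(K)) ≥ p^n`, where `Hom_R(K, F^n(K))` is the socle of `F^n(K)`. -/
theorem dim_hom_frobPower_ge
    (K : Type) [Field K] (p : ℕ) [CharP K p] (hp : 0 < p) (n : ℕ)
    (q : ℕ) (hq : q = p ^ n) :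
    (q : Cardinal) ≤ Module.rank K (frobSocle K q) :=
  dim_hom_frobPower_ge_general K q
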